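/- Let L be a logic with ⊢_B ⊆ L and L ≠ ⊢_B (a proper extension of the Dunn–Belnap logic B). If L enjoys interpolation, then either L = ⊢_LP or {p, −p} ⊢_L ⊥ for every atom p (i.e. L extends the logic ECQ, the extension of B by the explosive rule p, −p ⊢ ∅). -/

import Mathlib

/-- Propositional formulas: atoms, conjunction, disjunction, De Morgan negation, ⊤, ⊥. -/
inductive Fm : Type where
  | atom : ℕ → Fm
  | conj : Fm → Fm → Fm
  | disj : Fm → Fm → Fm
  | neg  : Fm → Fm
  | top  : Fm
  | bot  : Fm
deriving DecidableEq

/-- The atom `i` occurs in a formula. -/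
def occurs (i : ℕ) : Fm → Prop
  | .atom j => i = j
  | .conj φ ψ => occurs i φ ∨ occurs i ψ
  | .disj φ ψ => occurs i φ ∨ occurs i ψ
  | .neg φ => occurs i φ
  | .top => False
  | .bot => False

/-- Extension of a substitution (a map from atoms to formulas) to the unique
endomorphism of the formula algebra. -/
def fsubst (σ : ℕ → Fm) : Fm → Fm
  | .atom j => σ j
  | .conj φ ψ => .conj (fsubst σ φ) (fsubst σ ψ)
  | .disj φ ψ => .disj (fsubst σ φ) (fsubst σ ψ)
  | .neg φ => .neg (fsubst σ φ)
  | .top => .top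
  | .bot => .bot

/-- A logic (Hilbert relation): reflexive, monotone, satisfying cut and structurality. -/
structure IsLogic (L : Set Fm → Fm → Prop) : Prop where
  refl : ∀ φ : Fm, L {φ} φ
  mono : ∀ (Γ Δ : Set Fm) (φ : Fm), L Γ φ → L (Γ ∪ Δ) φ
  cut : ∀ (Γ Φ Δ : Set Fm) (ψ : Fm), (∀ φ ∈ Φ, L Γ φ) → L (Φ ∪ Δ) ψ → L (Γ ∪ Δ) ψ
  structural : ∀ (Γ : Set Fm) (φ : Fm) (σ : ℕ → Fm), L Γ φ → L (fsubst σ '' Γ) (fsubst σ φ)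

/-- `L` enjoys (L1, L2)-interpolation: whenever `φ ⊢_L ψ` there is an interpolant `χ`,
all of whose atoms occur in both `φ` and `ψ`, with `φ ⊢_{L1} χ` and `χ ⊢_{L2} ψ`. -/
def Interp (L1 L2 L : Set Fm → Fm → Prop) : Prop :=
  ∀ φ ψ : Fm, L {φ} ψ →
    ∃ χ : Fm, (∀ i, occurs i χ → occurs i φ ∧ occurs i ψ) ∧ L1 {φ} χ ∧ L2 {χ} ψ

/-- The four elements of the De Morgan algebra B4. -/
inductive B4 : Type where
  | f | n | b | t
deriving DecidableEq

/-- Meet in the truth order of B4 (bottom `f`, top `t`, `n` and `b` incomparable). -/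
def bmeet : B4 → B4 → B4
  | .f, _ => .f
  | _, .f => .f
  | .t, x => x
  | x, .t => x
  | .n, .n => .n
  | .b, .b => .b
  | .n, .b => .f
  | .b, .n => .f

/-- Join in the truth order of B4. -/
def bjoin : B4 → B4 → B4
  | .t, _ => .t
  | _, .t => .t
  | .f, x => x
  | x, .f => x
  | .n, .n => .n
  | .b, .b => .b
  | .n, .b => .t
  | .b, .n => .t

/-- De Morgan negation on B4: swaps `f` and `t`, fixes `n` and `b`. -/
def bneg : B4 → B4
  | .f => .t
  | .t => .f
  | .n => .n
  | .b => .b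

/-- The information order ⊑ on B4: bottom `n`, top `b`, `f` and `t` incomparable. -/
def infoLe (x y : B4) : Prop := x = y ∨ x = B4.n ∨ y = B4.b

/-- Evaluation of a formula in B4 under an atom assignment (the unique homomorphic
extension of the valuation of atoms). -/
def evalv (v : ℕ → B4) : Fm → B4
  | .atom j => v j
  | .conj φ ψ => bmeet (evalv v φ) (evalv v ψ)
  | .disj φ ψ => bjoin (evalv v φ) (evalv v ψ)
  | .neg φ => bneg (evalv v φ)
  | .top => .t
  | .bot => .f

/-- Designated values of the matrices B4 and LP3: `t` and `b`. -/
def desB (x : B4) : Prop := x = B4.t ∨ x = B4.b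

/-- Consequence over the matrix B4 (designated values {t, b}): the Dunn–Belnap logic B. -/
def Bcon (Γ : Set Fm) (φ : Fm) : Prop :=
  ∀ v : ℕ → B4, (∀ γ ∈ Γ, desB (evalv v γ)) → desB (evalv v φ)

/-- Consequence over the submatrix LP3 on {f, b, t} (designated {t, b}): the Logic of Paradox. -/
def LPcon (Γ : Set Fm) (φ : Fm) : Prop :=
  ∀ v : ℕ → B4, (∀ j, v j ≠ B4.n) → (∀ γ ∈ Γ, desB (evalv v γ)) → desB (evalv v φ)

/-- Consequence over the submatrix K3 on {f, n, t} (designated {t}): strong Kleene logic. -/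
def Kcon (Γ : Set Fm) (φ : Fm) : Prop :=
  ∀ v : ℕ → B4, (∀ j, v j ≠ B4.b) → (∀ γ ∈ Γ, evalv v γ = B4.t) → evalv v φ = B4.t

/-- Consequence over the matrix ETL4 (the algebra B4 with designated set {t}): Exactly True Logic. -/
def ETLcon (Γ : Set Fm) (φ : Fm) : Prop :=
  ∀ v : ℕ → B4, (∀ γ ∈ Γ, evalv v γ = B4.t) → evalv v φ = B4.t

/-- Consequence over the Boolean submatrix on {f, t} (designated {t}): classical logic CL. -/
def CLcon (Γ : Set Fm) (φ : Fm) : Prop :=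
  ∀ v : ℕ → B4, (∀ j, v j = B4.f ∨ v j = B4.t) →
    (∀ γ ∈ Γ, evalv v γ = B4.t) → evalv v φ = B4.t

/-!
Collapsing a B4 valuation `v` by the substitution `t ↦ ⊤, f ↦ ⊥, n ↦ p₀, b ↦ p₁` turns a rule
of `L` refuted by `v` into a rule of `L` in the atoms `p₀, p₁` refuted where `p₀ = n, p₁ = b`.
If some rule of `L` is refuted in LP3, `p₀` plays no role, and as `p₁, −p₁` force `p₁ = b` we
get `p₁, −p₁ ⊢_L ⊥`. Otherwise `L ⊆ LP`, and a rule of `L` refuted in B4 gives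
`p₁ ∧ −p₁ ⊢_L p₀ ∨ −p₀` by monotonicity of B4 in the information order. An interpolant of this
rule has no atoms, so it is constant; it is not false, since `p₁ ∧ −p₁` is satisfiable in LP3,
so `L` proves excluded middle. As LP is B plus excluded middle, `L = LP`.
-/

instance : Fintype B4 :=
  ⟨{B4.f, B4.n, B4.b, B4.t}, by intro x; cases x <;> simp⟩

instance : DecidablePred desB := fun x => inferInstanceAs (Decidable (x = _ ∨ x = _))

instance : DecidableRel infoLe := fun x y => inferInstanceAs (Decidable (x = y ∨ x = _ ∨ y = _))

theorem bmeet_infoLe :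
    ∀ x y x' y' : B4, infoLe x x' → infoLe y y' → infoLe (bmeet x y) (bmeet x' y') := by
  decide

theorem bjoin_infoLe :
    ∀ x y x' y' : B4, infoLe x x' → infoLe y y' → infoLe (bjoin x y) (bjoin x' y') := by
  decide

theorem bneg_infoLe : ∀ x x' : B4, infoLe x x' → infoLe (bneg x) (bneg x') := by
  decide

theorem desB_of_infoLe : ∀ x y : B4, infoLe x y → desB x → desB y := by
  decide

theorem eq_b_of_desB_of_desB_bneg : ∀ x : B4, desB x → desB (bneg x) → x = .b := by
  decide

theorem desB_bmeet_bneg_iff : ∀ x : B4, desB (bmeet x (bneg x)) ↔ x = .b := by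
  decide

theorem desB_bjoin_bneg_iff : ∀ x : B4, desB (bjoin x (bneg x)) ↔ x ≠ .n := by
  decide

theorem evalv_congr {u v : ℕ → B4} (φ : Fm) (h : ∀ i, occurs i φ → u i = v i) :
    evalv u φ = evalv v φ := by
  induction φ with
  | atom j => exact h j rfl
  | conj φ ψ ihφ ihψ | disj φ ψ ihφ ihψ =>
    simp only [evalv]
    rw [ihφ fun i hi => h i (.inl hi), ihψ fun i hi => h i (.inr hi)]
  | neg φ ih => exact congrArg bneg (ih h)
  | top | bot => rfl

theorem evalv_eq_of_forall_not_occurs {φ : Fm} (h : ∀ i, ¬ occurs i φ) (u v : ℕ → B4) :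
    evalv u φ = evalv v φ :=
  evalv_congr φ fun i hi => (h i hi).elim

theorem evalv_fsubst (σ : ℕ → Fm) (u : ℕ → B4) (φ : Fm) :
    evalv u (fsubst σ φ) = evalv (fun j => evalv u (σ j)) φ := by
  induction φ with
  | atom j => rfl
  | conj φ ψ ihφ ihψ | disj φ ψ ihφ ihψ => simp only [fsubst, evalv, ihφ, ihψ]
  | neg φ ih => simp only [fsubst, evalv, ih]
  | top | bot => rfl

theorem evalv_infoLe {u v : ℕ → B4} (h : ∀ j, infoLe (u j) (v j)) (φ : Fm) :
    infoLe (evalv u φ) (evalv v φ) := by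
  induction φ with
  | atom j => exact h j
  | conj φ ψ ihφ ihψ => exact bmeet_infoLe _ _ _ _ ihφ ihψ
  | disj φ ψ ihφ ihψ => exact bjoin_infoLe _ _ _ _ ihφ ihψ
  | neg φ ih => exact bneg_infoLe _ _ ih
  | top | bot => exact .inl rfl

namespace IsLogic

variable {L : Set Fm → Fm → Prop}

theorem of_mem (hL : IsLogic L) {Γ : Set Fm} {φ : Fm} (h : φ ∈ Γ) : L Γ φ := by
  simpa [Set.union_eq_self_of_subset_left (Set.singleton_subset_iff.mpr h)]
    using hL.mono {φ} Γ φ (hL.refl φ)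

theorem trans (hL : IsLogic L) {Γ Φ : Set Fm} {ψ : Fm} (h₁ : ∀ φ ∈ Φ, L Γ φ) (h₂ : L Φ ψ) :
    L Γ ψ := by
  simpa using hL.cut Γ Φ ∅ ψ h₁ (by simpa using h₂)

theorem trans_singleton (hL : IsLogic L) {Γ : Set Fm} {φ ψ : Fm} (h₁ : L Γ φ) (h₂ : L {φ} ψ) :
    L Γ ψ :=
  hL.trans (fun _ h => (Set.mem_singleton_iff.1 h) ▸ h₁) h₂

end IsLogic

def collapse (v : ℕ → B4) (j : ℕ) : Fm :=
  match v j with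
  | .f => .bot
  | .n => .atom 0
  | .b => .atom 1
  | .t => .top

def relabel (v : ℕ → B4) (x y : B4) (j : ℕ) : B4 :=
  match v j with
  | .f => .f
  | .n => x
  | .b => y
  | .t => .t

theorem evalv_fsubst_collapse (v u : ℕ → B4) (φ : Fm) :
    evalv u (fsubst (collapse v) φ) = evalv (relabel v (u 0) (u 1)) φ := by
  rw [evalv_fsubst]
  congr 1
  funext j
  unfold collapse relabel
  cases v j <;> rfl

theorem relabel_n_b (v : ℕ → B4) : relabel v .n .b = v := by
  funext j
  unfold relabel
  cases v j <;> rfl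

theorem relabel_eq_self {v : ℕ → B4} (hv : ∀ j, v j ≠ .n) (x : B4) : relabel v x .b = v := by
  funext j
  unfold relabel
  cases hj : v j <;> first | rfl | exact absurd hj (hv j)

theorem relabel_infoLe (v : ℕ → B4) {x x' y y' : B4} (hx : infoLe x x') (hy : infoLe y y')
    (j : ℕ) : infoLe (relabel v x y j) (relabel v x' y' j) := by
  unfold relabel
  cases v j
  all_goals first | assumption | exact .inl rfl

def excludedMiddle (φ : Fm) : Fm := .disj φ (.neg φ)

theorem Bcon_union_excludedMiddle_of_LPcon {Δ : Set Fm} {ψ : Fm} (h : LPcon Δ ψ) :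
    Bcon (Δ ∪ Set.range fun j => excludedMiddle (.atom j)) ψ := fun u hu =>
  h u (fun j => (desB_bjoin_bneg_iff _).1 (hu _ (.inr ⟨j, rfl⟩))) fun γ hγ => hu γ (.inl hγ)

variable {L : Set Fm → Fm → Prop}

theorem ecq_of_not_le_LPcon (hL : IsLogic L) (hBL : ∀ Γ φ, Bcon Γ φ → L Γ φ)
    (h : ¬ ∀ Γ φ, L Γ φ → LPcon Γ φ) (p : ℕ) : L {.atom p, .neg (.atom p)} .bot := by
  obtain ⟨Γ, φ, hLΓφ, v, hvn, hΓ, hφ⟩ : ∃ Γ φ, L Γ φ ∧ ∃ v : ℕ → B4, (∀ j, v j ≠ .n) ∧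
      (∀ γ ∈ Γ, desB (evalv v γ)) ∧ ¬ desB (evalv v φ) := by
    simpa [LPcon] using h
  have hcollapse : ∀ u : ℕ → B4, desB (u 1) → desB (bneg (u 1)) →
      ∀ ψ, evalv u (fsubst (collapse v) ψ) = evalv v ψ := by
    intro u hq hnq ψ
    rw [evalv_fsubst_collapse, eq_b_of_desB_of_desB_bneg _ hq hnq, relabel_eq_self hvn]
  have hφ' : L {.atom 1, .neg (.atom 1)} (fsubst (collapse v) φ) := by
    refine hL.trans ?_ (hL.structural _ _ _ hLΓφ)
    rintro _ ⟨γ, hγ, rfl⟩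
    refine hBL _ _ fun u hu => ?_
    rw [hcollapse u (hu (.atom 1) (by simp)) (hu (.neg (.atom 1)) (by simp))]
    exact hΓ γ hγ
  have hbot : L {.atom 1, .neg (.atom 1)} .bot := by
    refine hL.trans (Φ := insert (fsubst (collapse v) φ) {.atom 1, .neg (.atom 1)}) ?_
      (hBL _ _ fun u hu => ?_)
    · rintro _ (rfl | hψ)
      exacts [hφ', hL.of_mem hψ]
    · have := hu _ (.inl rfl)
      rw [hcollapse u (hu (.atom 1) (by simp)) (hu (.neg (.atom 1)) (by simp))] at this
      exact (hφ this).elim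
  simpa [Set.image_insert_eq, fsubst] using hL.structural _ _ (fun _ => .atom p) hbot

theorem entails_excludedMiddle_of_ne_Bcon (hL : IsLogic L) (hBL : ∀ Γ φ, Bcon Γ φ → L Γ φ)
    (hne : L ≠ Bcon) : L {.conj (.atom 1) (.neg (.atom 1))} (excludedMiddle (.atom 0)) := by
  obtain ⟨Γ, φ, hLΓφ, v, hΓ, hφ⟩ : ∃ Γ φ, L Γ φ ∧ ∃ v : ℕ → B4,
      (∀ γ ∈ Γ, desB (evalv v γ)) ∧ ¬ desB (evalv v φ) := by
    by_contra! h
    exact hne (funext₂ fun Γ φ => propext ⟨fun hL => h Γ φ hL, hBL Γ φ⟩)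
  have hΓ' : ∀ γ ∈ Γ, Bcon {.conj (.atom 1) (.neg (.atom 1))} (fsubst (collapse v) γ) := by
    intro γ hγ u hu
    have hb : u 1 = .b := (desB_bmeet_bneg_iff _).1 (hu _ rfl)
    rw [evalv_fsubst_collapse, hb]
    refine desB_of_infoLe _ _ (evalv_infoLe (relabel_infoLe v (.inr (.inl rfl)) (.inl rfl)) γ) ?_
    rw [relabel_n_b]
    exact hΓ γ hγ
  have hφ' : Bcon {fsubst (collapse v) φ} (excludedMiddle (.atom 0)) := by
    intro u hu
    refine (desB_bjoin_bneg_iff _).2 fun (hn : u 0 = .n) => hφ ?_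
    have := hu _ rfl
    rw [evalv_fsubst_collapse, hn] at this
    rw [← relabel_n_b v]
    exact desB_of_infoLe _ _ (evalv_infoLe (relabel_infoLe v (.inl rfl) (.inr (.inr rfl))) φ) this
  refine hL.trans_singleton (hL.trans ?_ (hL.structural _ _ _ hLΓφ)) (hBL _ _ hφ')
  rintro _ ⟨γ, hγ, rfl⟩
  exact hBL _ _ (hΓ' γ hγ)

theorem excludedMiddle_of_interp (hL : IsLogic L) (hBL : ∀ Γ φ, Bcon Γ φ → L Γ φ)
    (hLP : ∀ Γ φ, L Γ φ → LPcon Γ φ) (hint : Interp L L L)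
    (h : L {.conj (.atom 1) (.neg (.atom 1))} (excludedMiddle (.atom 0))) :
    L ∅ (excludedMiddle (.atom 0)) := by
  obtain ⟨χ, hχ, h₁, h₂⟩ := hint _ _ h
  have hclosed : ∀ i, ¬ occurs i χ := fun i hi => by
    have := hχ i hi
    simp only [occurs, excludedMiddle, or_self] at this
    omega
  have hvalid : Bcon ∅ χ := by
    intro u _
    rw [evalv_eq_of_forall_not_occurs hclosed u fun _ => .b]
    exact hLP _ _ h₁ (fun _ => .b) (fun _ => by decide) (by simp [evalv]; decide)
  exact hL.trans_singleton (hBL _ _ hvalid) h₂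

theorem eq_LPcon_of_excludedMiddle (hL : IsLogic L) (hBL : ∀ Γ φ, Bcon Γ φ → L Γ φ)
    (hLP : ∀ Γ φ, L Γ φ → LPcon Γ φ) (hem : L ∅ (excludedMiddle (.atom 0))) : L = LPcon := by
  funext Δ ψ
  refine propext ⟨hLP Δ ψ, fun h => hL.trans ?_ (hBL _ _ (Bcon_union_excludedMiddle_of_LPcon h))⟩
  rintro _ (hγ | ⟨j, rfl⟩)
  · exact hL.of_mem hγ
  · have hj : L ∅ (excludedMiddle (.atom j)) := by
      simpa only [Set.image_empty, excludedMiddle, fsubst]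
        using hL.structural _ _ (fun _ => .atom j) hem
    simpa using hL.mono _ Δ _ hj

/-- If L is a proper extension of the Dunn–Belnap logic B which enjoys interpolation,
then either L is the Logic of Paradox LP or L validates the explosive rule
p, −p ⊢ ⊥ for every atom p (i.e. L extends ECQ). -/
theorem stmt15 (L : Set Fm → Fm → Prop) (hL : IsLogic L)
    (hBL : ∀ Γ φ, Bcon Γ φ → L Γ φ) (hne : L ≠ Bcon)
    (hint : Interp L L L) :
    L = LPcon ∨ ∀ p : ℕ, L {Fm.atom p, Fm.neg (Fm.atom p)} Fm.bot := by
  by_cases hLP : ∀ Γ φ, L Γ φ → LPcon Γ φ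
  · exact .inl <| eq_LPcon_of_excludedMiddle hL hBL hLP <|
      excludedMiddle_of_interp hL hBL hLP hint (entails_excludedMiddle_of_ne_Bcon hL hBL hne)
  · exact .inr (ecq_of_not_le_LPcon hL hBL hLP)
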